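/- Let φ(x) = 1 + x², β > 1/2, ρ > 0, n ∈ ℝ \ [0,1], and L f = (1+x²) f'' - 2(β-1) x f'. Then L satisfies the CD(ρ,n) condition (that is, Γ₂(f) ≥ ρΓ(f) + (1/n)(Lf)² pointwise for all smooth f) if and only if 0 < ρ ≤ 2β - 1 and 0 < ρ(1-n) ≤ (2β-1)². -/

import Mathlib

lemma quad_smooth (p q : ℝ) : ContDiff ℝ (⊤ : ℕ∞) (fun y : ℝ => p * y + q * y ^ 2) := by
  fun_prop

lemma quad_deriv (p q : ℝ) :
    deriv (fun y : ℝ => p * y + q * y ^ 2) = fun y => p + q * (2 * y) := by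
  funext y
  have h1 : HasDerivAt (fun y : ℝ => y) 1 y := hasDerivAt_id y
  have h2 : HasDerivAt (fun y : ℝ => y ^ 2) (2 * y) y := by
    simpa using hasDerivAt_pow 2 y
  have : HasDerivAt (fun y : ℝ => p * y + q * y ^ 2) (p + q * (2 * y)) y := by
    have h := (h1.const_mul p).add (h2.const_mul q)
    simp only [mul_one] at h
    exact h
  exact this.deriv

lemma quad_deriv2 (p q x : ℝ) :
    deriv (deriv (fun y : ℝ => p * y + q * y ^ 2)) x = q * 2 := by
  rw [quad_deriv]
  have : HasDerivAt (fun y : ℝ => p + q * (2 * y)) (q * 2) x := by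
    simpa using (((hasDerivAt_id x).const_mul (2:ℝ)).const_mul q).const_add p
  exact this.deriv

lemma aux5 (n T S : ℝ) (hn' : n < 0 ∨ 1 < n) (h1 : (1/n) * S^2 ≤ T) :
    (1 - n) * (n * T - S^2) ≤ 0 := by
  have hne : n ≠ 0 := by rcases hn' with h | h <;> intro h0 <;> rw [h0] at h <;> linarith
  have key : n * ((1/n) * S^2) = S^2 := by field_simp
  rcases hn' with hlt | hgt
  · have h2 : n * T ≤ n * ((1/n) * S^2) := mul_le_mul_of_nonpos_left h1 hlt.le
    have h3 : n * T ≤ S^2 := by rw [key] at h2; exact h2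
    have h4 : 0 ≤ (1 - n) * (S^2 - n * T) := mul_nonneg (by linarith) (by linarith)
    nlinarith [h4]
  · have h2 : n * ((1/n) * S^2) ≤ n * T := mul_le_mul_of_nonneg_left h1 (by linarith)
    have h3 : S^2 ≤ n * T := by rw [key] at h2; exact h2
    have h4 : 0 ≤ (n - 1) * (n * T - S^2) := mul_nonneg (by linarith) (by linarith)
    nlinarith [h4]

lemma aux6 (n T S : ℝ) (hlt : n < 0) (hW : n * T - S^2 ≤ 0) : (1/n) * S^2 ≤ T := by
  have h := (div_le_iff_of_neg hlt).mpr (by linarith : T * n ≤ S^2)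
  calc (1/n) * S^2 = S^2 / n := by ring
    _ ≤ T := h

set_option maxHeartbeats 1000000 in
theorem stmt_9 (β ρ n : ℝ) (hβ : 1 / 2 < β) (hρ : 0 < ρ)
    (hn : n ∉ Set.Icc (0 : ℝ) 1) :
    (∀ f : ℝ → ℝ, ContDiff ℝ (⊤ : ℕ∞) f → ∀ x : ℝ,
        (1 / 2) * ((2 * β - 1) * (1 + x ^ 2) * 2 + (1 - β) * (2 * x) ^ 2)
            * (deriv f x) ^ 2
          + (1 + x ^ 2) * (2 * x) * deriv f x * deriv (deriv f) x
          + (1 + x ^ 2) ^ 2 * (deriv (deriv f) x) ^ 2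
        ≥ ρ * ((1 + x ^ 2) * (deriv f x) ^ 2)
          + (1 / n) * ((1 + x ^ 2) * deriv (deriv f) x - 2 * (β - 1) * x * deriv f x) ^ 2)
    ↔ (0 < ρ ∧ ρ ≤ 2 * β - 1 ∧ 0 < ρ * (1 - n) ∧ ρ * (1 - n) ≤ (2 * β - 1) ^ 2) := by
  have hn' : n < 0 ∨ 1 < n := by
    rcases lt_or_ge n 0 with h | h
    · exact Or.inl h
    · right
      by_contra h2
      push_neg at h2
      exact hn ⟨h, h2⟩
  have hne : n ≠ 0 := by rcases hn' with h | h <;> intro h0 <;> rw [h0] at h <;> linarith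
  have hb1 : 0 < 2 * β - 1 := by linarith
  constructor
  · intro H
    have hq : ∀ x a b : ℝ,
        (1 / 2) * ((2 * β - 1) * (1 + x ^ 2) * 2 + (1 - β) * (2 * x) ^ 2) * a ^ 2
          + (1 + x ^ 2) * (2 * x) * a * b + (1 + x ^ 2) ^ 2 * b ^ 2
        ≥ ρ * ((1 + x ^ 2) * a ^ 2)
          + (1 / n) * ((1 + x ^ 2) * b - 2 * (β - 1) * x * a) ^ 2 := by
      intro x a b
      have hf := H (fun y : ℝ => (a - b * x) * y + (b / 2) * y ^ 2)
        (quad_smooth _ _) x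
      have h1 : deriv (fun y : ℝ => (a - b * x) * y + (b / 2) * y ^ 2) x = a := by
        simp only [quad_deriv]; ring
      have h2 : deriv (deriv (fun y : ℝ => (a - b * x) * y + (b / 2) * y ^ 2)) x = b := by
        rw [quad_deriv2]; ring
      rw [h1, h2] at hf
      exact hf
    have hc1 : ρ ≤ 2 * β - 1 := by nlinarith [hq 0 1 0]
    have hE : ∀ x : ℝ, 0 ≤ n * (n - 1) * (2 * β - 1 - ρ)
        + x ^ 2 * (n * (ρ * (1 - n) - (2 * β - 1) ^ 2)) := by
      intro x
      have h5 : (1 - n) * (n * ((1 / 2) * ((2 * β - 1) * (1 + x ^ 2) * 2 + (1 - β) * (2 * x) ^ 2)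
            * ((n - 1) * (1 + x ^ 2) ^ 2) ^ 2
          + (1 + x ^ 2) * (2 * x) * ((n - 1) * (1 + x ^ 2) ^ 2) * (-(x * (1 + x ^ 2) * (n + 2 * β - 2)))
          + (1 + x ^ 2) ^ 2 * (-(x * (1 + x ^ 2) * (n + 2 * β - 2))) ^ 2
          - ρ * ((1 + x ^ 2) * ((n - 1) * (1 + x ^ 2) ^ 2) ^ 2))
          - ((1 + x ^ 2) * (-(x * (1 + x ^ 2) * (n + 2 * β - 2)))
              - 2 * (β - 1) * x * ((n - 1) * (1 + x ^ 2) ^ 2)) ^ 2) ≤ 0 :=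
        aux5 n _ _ hn'
          (by linarith [hq x ((n - 1) * (1 + x ^ 2) ^ 2) (-(x * (1 + x ^ 2) * (n + 2 * β - 2)))])
      by_contra hc
      push_neg at hc
      have hsq : 0 < (n - 1) ^ 2 := by rcases hn' with h | h <;> nlinarith
      have hpos : 0 < (n - 1) ^ 2 * (1 + x ^ 2) ^ 4 := mul_pos hsq (by positivity)
      have hprod := mul_neg_of_pos_of_neg hpos hc
      nlinarith [h5, hprod]
    have hc0 : 0 ≤ n * (n - 1) * (2 * β - 1 - ρ) := by
      have := hE 0; nlinarith [this]
    have hM : 0 ≤ n * (ρ * (1 - n) - (2 * β - 1) ^ 2) := by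
      by_contra hc
      push_neg at hc
      have hden : (0:ℝ) < -(n * (ρ * (1 - n) - (2 * β - 1) ^ 2)) := by linarith
      have hx := hE (Real.sqrt ((n * (n - 1) * (2 * β - 1 - ρ) + 1)
        / (-(n * (ρ * (1 - n) - (2 * β - 1) ^ 2)))))
      rw [Real.sq_sqrt (div_nonneg (by linarith) hden.le)] at hx
      have heq : (n * (n - 1) * (2 * β - 1 - ρ) + 1)
            / (-(n * (ρ * (1 - n) - (2 * β - 1) ^ 2)))
            * (n * (ρ * (1 - n) - (2 * β - 1) ^ 2))
          = -(n * (n - 1) * (2 * β - 1 - ρ) + 1) := by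
        rw [div_mul_eq_mul_div, div_eq_iff hden.ne']
        ring
      linarith [hx, heq]
    have hlt : n < 0 := by
      rcases hn' with h | h
      · exact h
      · exfalso
        have hD : ρ * (1 - n) - (2 * β - 1) ^ 2 < 0 := by nlinarith
        have := mul_neg_of_pos_of_neg (show (0:ℝ) < n by linarith) hD
        linarith
    refine ⟨hρ, hc1, mul_pos hρ (by linarith), ?_⟩
    by_contra hcc
    push_neg at hcc
    have := mul_neg_of_neg_of_pos hlt (by linarith : 0 < ρ * (1 - n) - (2 * β - 1) ^ 2)
    linarith
  · rintro ⟨-, h1, h2, h3⟩ f hf x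
    have hlt : n < 0 := by
      rcases hn' with h | h
      · exact h
      · exfalso; nlinarith
    set A := deriv f x with hA
    set B := deriv (deriv f) x with hB
    have hW : n * ((1 / 2) * ((2 * β - 1) * (1 + x ^ 2) * 2 + (1 - β) * (2 * x) ^ 2) * A ^ 2
          + (1 + x ^ 2) * (2 * x) * A * B + (1 + x ^ 2) ^ 2 * B ^ 2
          - ρ * ((1 + x ^ 2) * A ^ 2))
        - ((1 + x ^ 2) * B - 2 * (β - 1) * x * A) ^ 2 ≤ 0 := by
      have hneg : (n - 1) * (1 + x ^ 2) ^ 2 < 0 :=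
        mul_neg_of_neg_of_pos (by linarith) (by positivity)
      have hnn : 0 ≤ n * (n - 1) := (mul_pos_of_neg_of_neg hlt (by linarith)).le
      have ht1 : 0 ≤ (1 + x ^ 2) ^ 2 * (n * (n - 1) * (2 * β - 1 - ρ)) * A ^ 2 :=
        mul_nonneg (mul_nonneg (by positivity) (mul_nonneg hnn (by linarith))) (sq_nonneg A)
      have hD : 0 ≤ n * (ρ * (1 - n) - (2 * β - 1) ^ 2) := by
        nlinarith [mul_nonneg (neg_nonneg.2 hlt.le)
          (neg_nonneg.2 (by linarith : ρ * (1 - n) - (2 * β - 1) ^ 2 ≤ 0))]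
      have ht2 : 0 ≤ (1 + x ^ 2) ^ 2 * x ^ 2 * (n * (ρ * (1 - n) - (2 * β - 1) ^ 2)) * A ^ 2 :=
        mul_nonneg (mul_nonneg (mul_nonneg (by positivity : (0:ℝ) ≤ (1 + x ^ 2) ^ 2)
          (sq_nonneg x)) hD) (sq_nonneg A)
      by_contra hcW
      push_neg at hcW
      have hprod := mul_neg_of_neg_of_pos hneg hcW
      nlinarith [hprod, ht1, ht2,
        sq_nonneg ((n - 1) * (1 + x ^ 2) ^ 2 * B + x * (1 + x ^ 2) * (n + 2 * β - 2) * A)]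
    have hfin := aux6 n _ _ hlt hW
    linarith [hfin]
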